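/- For the Euclidean algebra e(2) with [e₂,e₃] = e₁, [e₃,e₁] = e₂, [e₁,e₂] = 0, the r-matrix r = e₁∧e₃ + i e₂∧e₃ induces on the dual space the brackets [e¹,e²]* = −e¹ − i e², [e²,e³]* = e³, [e¹,e³]* = −i e³, and this dual Lie algebra is isomorphic to j(3). -/
import Mathlib


noncomputable section

/-- `e i` is the `i`-th standard basis vector (also used for the dual basis `eⁱ`). -/
def e (i : Fin 3) : Fin 3 → ℂ := fun j => if j = i then 1 else 0

/-- Bilinear bracket determined by structure constants `c`: `[e i, e j] = ∑ k, c i j k • e k`. -/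
def bra (c : Fin 3 → Fin 3 → Fin 3 → ℂ) (x y : Fin 3 → ℂ) : Fin 3 → ℂ :=
  fun k => ∑ i, ∑ j, x i * y j * c i j k

/-- Coordinates of the cobracket `δ(x) = [x⊗1 + 1⊗x, r]` where the r-matrix has
coordinates `ρ`, i.e. `r = ∑ ρ i j • e i ⊗ e j`. -/
def cob (c : Fin 3 → Fin 3 → Fin 3 → ℂ) (ρ : Fin 3 → Fin 3 → ℂ) (x : Fin 3 → ℂ) :
    Fin 3 → Fin 3 → ℂ :=
  fun a b => ∑ i, ∑ j, ρ i j * (bra c x (e i) a * e j b + e i a * bra c x (e j) b)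

/-- The induced bracket on the dual space: `⟨[ξ,η]*, e k⟩ = ⟨ξ ⊗ η, δ(e k)⟩`. -/
def dbra (c : Fin 3 → Fin 3 → Fin 3 → ℂ) (ρ : Fin 3 → Fin 3 → ℂ) (ξ η : Fin 3 → ℂ) :
    Fin 3 → ℂ :=
  fun k => ∑ a, ∑ b, ξ a * η b * cob c ρ (e k) a b

/-- Coordinates of the Schouten bracket
`[r,r]ₛ = [r₁₂,r₁₃] + [r₁₂,r₂₃] + [r₁₃,r₂₃]` in `L⊗L⊗L`. -/
def sch (c : Fin 3 → Fin 3 → Fin 3 → ℂ) (ρ : Fin 3 → Fin 3 → ℂ) :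
    Fin 3 → Fin 3 → Fin 3 → ℂ :=
  fun p q s => ∑ i, ∑ j, ∑ k, ∑ l, ρ i j * ρ k l *
    (c i k p * e j q * e l s + e i p * c j k q * e l s + e i p * e k q * c j l s)

/-- Structure constants of `e(2)`: `[e₂,e₃] = e₁`, `[e₃,e₁] = e₂`, `[e₁,e₂] = 0`. -/
def ce2 : Fin 3 → Fin 3 → Fin 3 → ℂ := fun i j k =>
  (if i = 1 ∧ j = 2 ∧ k = 0 then 1 else if i = 2 ∧ j = 0 ∧ k = 1 then 1 else 0)
  - (if j = 1 ∧ i = 2 ∧ k = 0 then 1 else if j = 2 ∧ i = 0 ∧ k = 1 then 1 else 0)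

/-- The r-matrix `r = e₁∧e₃ + i e₂∧e₃`. -/
def ρe2 : Fin 3 → Fin 3 → ℂ := fun p q =>
  (if p = 0 ∧ q = 2 then 1 else if p = 1 ∧ q = 2 then Complex.I else 0)
  - (if q = 0 ∧ p = 2 then 1 else if q = 1 ∧ p = 2 then Complex.I else 0)

/-- Structure constants of `j(3)`: `[f₁,f₂] = f₂`, `[f₂,f₃] = 0`, `[f₁,f₃] = f₃`. -/
def cj : Fin 3 → Fin 3 → Fin 3 → ℂ := fun i j k =>
  (if i = 0 ∧ j = 1 ∧ k = 1 then 1 else if i = 0 ∧ j = 2 ∧ k = 2 then 1 else 0)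
  - (if j = 0 ∧ i = 1 ∧ k = 1 then 1 else if j = 0 ∧ i = 2 ∧ k = 2 then 1 else 0)

/-- Auxiliary linear map for the isomorphism. -/
def Sl : (Fin 3 → ℂ) →ₗ[ℂ] (Fin 3 → ℂ) where
  toFun x := ![-Complex.I * x 0 + x 1, x 0, x 2]
  map_add' a b := by funext k; fin_cases k <;> simp <;> ring
  map_smul' c a := by funext k; fin_cases k <;> simp <;> ring

/-- Auxiliary inverse linear map. -/
def Tl : (Fin 3 → ℂ) →ₗ[ℂ] (Fin 3 → ℂ) where
  toFun y := ![y 1, y 0 + Complex.I * y 1, y 2]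
  map_add' a b := by funext k; fin_cases k <;> simp <;> ring
  map_smul' c a := by funext k; fin_cases k <;> simp <;> ring

lemma Sl_Tl : Sl.comp Tl = LinearMap.id := by
  ext y k
  fin_cases k <;> simp [Sl, Tl] <;> ring_nf <;> simp [Complex.I_sq] <;> ring

lemma Tl_Sl : Tl.comp Sl = LinearMap.id := by
  ext y k
  fin_cases k <;> simp [Sl, Tl] <;> ring_nf <;> simp [Complex.I_sq] <;> ring

lemma Sl_bra (x y : Fin 3 → ℂ) : Sl (dbra ce2 ρe2 x y) = bra cj (Sl x) (Sl y) := by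
  funext k
  fin_cases k <;>
    simp [Sl, dbra, cob, bra, ce2, ρe2, cj, e, Fin.sum_univ_succ] <;> ring

/-- For `e(2)`, the r-matrix `r = e₁∧e₃ + i e₂∧e₃` induces on the dual the brackets
`[e¹,e²]* = −e¹ − i e²`, `[e²,e³]* = e³`, `[e¹,e³]* = −i e³`, and the resulting dual
Lie algebra is isomorphic to `j(3)`. -/
theorem euclidean_dual_is_j3 :
    dbra ce2 ρe2 (e 0) (e 1) = (fun k => -(e 0 k) - Complex.I * e 1 k) ∧
    dbra ce2 ρe2 (e 1) (e 2) = e 2 ∧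
    dbra ce2 ρe2 (e 0) (e 2) = (fun k => -(Complex.I) * e 2 k) ∧
    ∃ S : (Fin 3 → ℂ) ≃ₗ[ℂ] (Fin 3 → ℂ),
      ∀ x y : Fin 3 → ℂ, S (dbra ce2 ρe2 x y) = bra cj (S x) (S y) := by
  refine ⟨?_, ?_, ?_, ⟨LinearEquiv.ofLinear Sl Tl Sl_Tl Tl_Sl, fun x y => Sl_bra x y⟩⟩
  · funext k
    fin_cases k <;> simp [dbra, cob, bra, ce2, ρe2, e, Fin.sum_univ_succ]
  · funext k
    fin_cases k <;> simp [dbra, cob, bra, ce2, ρe2, e, Fin.sum_univ_succ]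
  · funext k
    fin_cases k <;> simp [dbra, cob, bra, ce2, ρe2, e, Fin.sum_univ_succ]
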